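/- arXiv:1304.4376 — 2 statements merged into one kernel-verified Lean document; each statement's English description precedes it below -/
import Mathlib

section
/- Under the same hypotheses, the auxiliary function Λb_j − d_j satisfies ∂_t(Λ b_j − d_j) + Λ(b_j + θ_j) = 0, and consequently (1/2) d/dt (‖Λ b_j − d_j‖²_{L²} + ‖b_j‖²_{L²} + ‖θ_j‖²_{L²}) + ‖Λ b_j‖²_{L²} + ⟨Λ θ_j, Λ b_j⟩_{L²} + κ ‖Λ θ_j‖²_{L²} = 0. -/
open scoped RealInnerProductSpace

/-- for the localized linearized system (`Δ = −Λ²`, `Λ` self-adjoint),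
the auxiliary function `Λ b_j − d_j` satisfies `∂_t(Λ b_j − d_j) + Λ(b_j + θ_j) = 0`,
and consequently `(1/2) d/dt (‖Λ b_j − d_j‖² + ‖b_j‖² + ‖θ_j‖²) + ‖Λ b_j‖²
+ ⟪Λ θ_j, Λ b_j⟫ + κ ‖Λ θ_j‖² = 0`. -/
theorem improved_energy_identity {H : Type*} [NormedAddCommGroup H] [InnerProductSpace ℝ H]
    (Λ : H →L[ℝ] H) (hΛ : ∀ x y : H, ⟪Λ x, y⟫ = ⟪x, Λ y⟫)
    (κ : ℝ) (hκ : 0 ≤ κ)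
    (b d θ : ℝ → H)
    (hb : ∀ t, HasDerivAt b (-(Λ (d t))) t)
    (hd : ∀ t, HasDerivAt d (-(Λ (Λ (d t))) + Λ (b t + θ t)) t)
    (hθ : ∀ t, HasDerivAt θ (-(Λ (d t)) - κ • Λ (Λ (θ t))) t) :
    (∀ t, HasDerivAt (fun s => Λ (b s) - d s) (-(Λ (b t + θ t))) t) ∧
    ∀ t, HasDerivAt
      (fun s => (‖Λ (b s) - d s‖ ^ 2 + ‖b s‖ ^ 2 + ‖θ s‖ ^ 2) / 2)
      (-(‖Λ (b t)‖ ^ 2 + ⟪Λ (θ t), Λ (b t)⟫ + κ * ‖Λ (θ t)‖ ^ 2)) t := by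
  have hg : ∀ t, HasDerivAt (fun s => Λ (b s) - d s) (-(Λ (b t + θ t))) t := by
    intro t
    have h1 : HasDerivAt (fun s => Λ (b s)) (Λ (-(Λ (d t)))) t :=
      (Λ.hasFDerivAt.comp_hasDerivAt t (hb t))
    have := h1.sub (hd t)
    refine this.congr_deriv ?_
    simp only [map_neg]
    abel
  refine ⟨hg, fun t => ?_⟩
  have hI : ∀ (f : ℝ → H) (f' : H), HasDerivAt f f' t →
      HasDerivAt (fun s => ‖f s‖ ^ 2) (2 * ⟪f' , f t⟫) t := by
    intro f f' hf
    have := (hf.inner ℝ hf)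
    have heq : (fun s => ⟪f s, f s⟫) = fun s => ‖f s‖ ^ 2 := by
      funext s; rw [real_inner_self_eq_norm_sq]
    rw [heq] at this
    refine this.congr_deriv ?_
    rw [real_inner_comm (f t) f']
    ring
  have h1 := hI _ _ (hg t)
  have h2 := hI _ _ (hb t)
  have h3 := hI _ _ (hθ t)
  have h := ((h1.add h2).add h3).div_const 2
  refine h.congr_deriv ?_
  have key : ⟪Λ (b t + θ t), d t⟫ = ⟪b t + θ t, Λ (d t)⟫ := hΛ _ _
  simp only [inner_neg_left, inner_sub_right, inner_add_left, inner_sub_left, inner_smul_left,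
    map_add, conj_trivial] at *
  rw [key] at *
  have e1 : ⟪Λ (Λ (θ t)), θ t⟫ = ‖Λ (θ t)‖ ^ 2 := by
    rw [hΛ, real_inner_self_eq_norm_sq]
  have e2 : ⟪Λ (b t), Λ (b t)⟫ = ‖Λ (b t)‖ ^ 2 := real_inner_self_eq_norm_sq _
  have e3 : ⟪Λ (d t), b t⟫ = ⟪b t, Λ (d t)⟫ := real_inner_comm _ _
  have e4 : ⟪Λ (d t), θ t⟫ = ⟪θ t, Λ (d t)⟫ := real_inner_comm _ _
  rw [e1, e2, e3, e4]
  ring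
end

section
/- Consider the ODE-type system in Fourier variables: for fixed ξ ∈ ℝ³ with |ξ| = r > 0, the 3×3 real linear system x' = A x with A = [[0, −r, 0], [r, −r², r], [0, −r, −κ r²]] (corresponding to ∂_t b + Λd = 0, ∂_t d − Δd − Λ(b+θ) = 0, ∂_t θ + Λd − κΔθ = 0). If κ > 0, every eigenvalue of A has nonpositive real part, and there exist constants c, C > 0 depending only on min(1,κ) such that solutions satisfy ‖x(t)‖ ≤ C e^{−c min(1,κ) min(r²,1/min(1,κ)) t} ‖x(0)‖ in suitable weighted norms, in particular ‖x(t)‖ ≤ C e^{−c min(1,κ) r² t}‖x(0)‖ when r² min(1,κ) ≤ 1. -/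
noncomputable section

/-- The matrix of the linearized system at a Fourier mode of radius `r`:
`A = [[0, −r, 0], [r, −r², r], [0, −r, −κ r²]]`. -/
def acousticMatrix (r κ : ℝ) : Matrix (Fin 3) (Fin 3) ℝ :=
  !![0, -r, 0; r, -r ^ 2, r; 0, -r, -κ * r ^ 2]

/-- The weighted norm `‖(m r b, d, θ)‖` used in the high-frequency regime. -/
def wNorm (m r : ℝ) (y : Fin 3 → ℝ) : ℝ :=
  Real.sqrt ((m * r * y 0) ^ 2 + y 1 ^ 2 + y 2 ^ 2)

/-- A root of the characteristic polynomial admits an eigenvector. -/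
lemma charpoly_root_eigen {B : Matrix (Fin 3) (Fin 3) ℂ} {μ : ℂ}
    (h : B.charpoly.IsRoot μ) : ∃ v : Fin 3 → ℂ, v ≠ 0 ∧ B.mulVec v = μ • v := by
  have hdet : (μ • (1 : Matrix (Fin 3) (Fin 3) ℂ) - B).det = 0 := by
    have h2 : (Polynomial.evalRingHom μ) (Matrix.charmatrix B).det
        = ((Matrix.charmatrix B).map (Polynomial.evalRingHom μ)).det := RingHom.map_det _ _
    have h3 : (Matrix.charmatrix B).map (Polynomial.evalRingHom μ)
        = μ • (1 : Matrix (Fin 3) (Fin 3) ℂ) - B := by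
      ext i j
      by_cases hij : i = j <;>
        simp [hij, Matrix.charmatrix_apply, Matrix.map_apply, Matrix.one_apply,
          Matrix.diagonal_apply, Matrix.sub_apply, Matrix.smul_apply]
    rw [← h3, ← h2]
    simpa [Matrix.charpoly] using h
  obtain ⟨v, hv, hmv⟩ := Matrix.exists_mulVec_eq_zero_iff.mpr hdet
  refine ⟨v, hv, ?_⟩
  rw [Matrix.sub_mulVec, Matrix.smul_mulVec, Matrix.one_mulVec, sub_eq_zero] at hmv
  exact hmv.symm

/-- Gronwall-type decay: if `F' + λ F ≤ 0` then `F t ≤ F 0 e^{-λ t}` for `t ≥ 0`. -/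
lemma decay_aux (F Φ : ℝ → ℝ) (lam : ℝ)
    (hF : ∀ t, HasDerivAt F (Φ t) t) (hle : ∀ t, Φ t + lam * F t ≤ 0) :
    ∀ t, 0 ≤ t → F t ≤ F 0 * Real.exp (-(lam * t)) := by
  have hH : ∀ t, HasDerivAt (fun s => F s * Real.exp (lam * s))
      ((Φ t + lam * F t) * Real.exp (lam * t)) t := by
    intro t
    have he : HasDerivAt (fun s : ℝ => Real.exp (lam * s))
        (Real.exp (lam * t) * (lam * 1)) t := ((hasDerivAt_id t).const_mul lam).exp
    have := (hF t).mul he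
    exact this.congr_deriv (by ring)
  have hanti : Antitone (fun s => F s * Real.exp (lam * s)) := by
    apply antitone_of_deriv_nonpos
    · intro t; exact (hH t).differentiableAt
    · intro t
      rw [(hH t).deriv]
      have := mul_le_mul_of_nonneg_right (hle t) (Real.exp_nonneg (lam * t))
      simpa using this
  intro t ht
  have h := hanti ht
  simp only [mul_zero, Real.exp_zero, mul_one] at h
  rw [Real.exp_neg, ← div_eq_mul_inv, le_div_iff₀ (Real.exp_pos _)]
  exact h

lemma sqrt_exp' (y : ℝ) : Real.sqrt (Real.exp y) = Real.exp (y / 2) := by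
  rw [show Real.exp y = Real.exp (y / 2) * Real.exp (y / 2) by rw [← Real.exp_add, add_halves]]
  exact Real.sqrt_mul_self (Real.exp_nonneg _)

lemma sqrt_le_of_le_mul {A B M E : ℝ} (hM : 0 ≤ M) (hE : 0 ≤ E) (hB : 0 ≤ B)
    (h : A ≤ M * E * B) : Real.sqrt A ≤ Real.sqrt M * Real.sqrt E * Real.sqrt B := by
  calc Real.sqrt A ≤ Real.sqrt (M * E * B) := Real.sqrt_le_sqrt h
  _ = _ := by rw [Real.sqrt_mul (by positivity), Real.sqrt_mul hM]


section ptwise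
variable {k α κ r b d th : ℝ}

lemma ineq_lowF (hα1 : 1 ≤ α) :
    b ^ 2 + d ^ 2 + th ^ 2
      ≤ α * (d * d) + (1 + α) * (b * b + th * th) + (r * b - d) * (r * b - d) := by
  nlinarith [sq_nonneg (r * b - d), mul_nonneg (sub_nonneg.mpr hα1) (sq_nonneg d),
    mul_nonneg (sub_nonneg.mpr hα1) (sq_nonneg b),
    mul_nonneg (sub_nonneg.mpr hα1) (sq_nonneg th), sq_nonneg b, sq_nonneg th]

lemma ineq_lowB (hα1 : 1 ≤ α) (hκα : 2 ≤ κ * (1 + α)) :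
    α * ((r * b - r ^ 2 * d + r * th) * d + d * (r * b - r ^ 2 * d + r * th))
      + (1 + α) * ((-r * d * b + b * (-r * d))
          + ((-r * d - κ * r ^ 2 * th) * th + th * (-r * d - κ * r ^ 2 * th)))
      + ((r * (-r * d) - (r * b - r ^ 2 * d + r * th)) * (r * b - d)
          + (r * b - d) * (r * (-r * d) - (r * b - r ^ 2 * d + r * th)))
      ≤ -(r ^ 2) * (b ^ 2 + d ^ 2 + th ^ 2) := by
  nlinarith [mul_nonneg (sq_nonneg r) (sq_nonneg (b + th)),
    mul_nonneg (mul_nonneg (sq_nonneg r) (sq_nonneg d)) (sub_nonneg.mpr hα1),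
    mul_nonneg (mul_nonneg (sq_nonneg r) (sq_nonneg th)) (sub_nonneg.mpr hκα),
    mul_nonneg (sq_nonneg r) (sq_nonneg th), mul_nonneg (sq_nonneg r) (sq_nonneg d)]

lemma ineq_lowA (hk0 : 0 < k) (hk1 : k ≤ 1) (hα : k * α = 2 - k) (hlow : r ^ 2 * k ≤ 1) :
    k * (α * (d * d) + (1 + α) * (b * b + th * th) + (r * b - d) * (r * b - d))
      ≤ 5 * (b ^ 2 + d ^ 2 + th ^ 2) := by
  nlinarith [mul_nonneg hk0.le (sq_nonneg (r * b + d)),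
    mul_nonneg (sub_nonneg.mpr hlow) (sq_nonneg b),
    mul_nonneg hk0.le (sq_nonneg d), mul_nonneg hk0.le (sq_nonneg b),
    mul_nonneg hk0.le (sq_nonneg th), sq_nonneg b, sq_nonneg d, sq_nonneg th,
    mul_nonneg (sub_nonneg.mpr hk1) (sq_nonneg d),
    mul_nonneg (sub_nonneg.mpr hk1) (sq_nonneg th)]

lemma ineq_highB (hk1 : k ≤ 1) (hα1 : 1 ≤ α) (hκα : 2 ≤ κ * (1 + α)) (hk0 : 0 < k)
    (hr1 : 1 ≤ r ^ 2) :
    α * ((r * b - r ^ 2 * d + r * th) * d + d * (r * b - r ^ 2 * d + r * th))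
      + (1 + α) * ((-r * d * b + b * (-r * d))
          + ((-r * d - κ * r ^ 2 * th) * th + th * (-r * d - κ * r ^ 2 * th)))
      + ((r * (-r * d) - (r * b - r ^ 2 * d + r * th)) * (r * b - d)
          + (r * b - d) * (r * (-r * d) - (r * b - r ^ 2 * d + r * th)))
      ≤ -((k * r * b) ^ 2 + d ^ 2 + th ^ 2) := by
  nlinarith [mul_nonneg (sq_nonneg r) (sq_nonneg (b + th)),
    mul_nonneg (mul_nonneg (sq_nonneg r) (sq_nonneg d)) (sub_nonneg.mpr hα1),
    mul_nonneg (mul_nonneg (sq_nonneg r) (sq_nonneg th)) (sub_nonneg.mpr hκα),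
    mul_nonneg (sub_nonneg.mpr hr1) (sq_nonneg th),
    mul_nonneg (sub_nonneg.mpr hr1) (sq_nonneg d),
    mul_nonneg (mul_nonneg (mul_nonneg (sub_nonneg.mpr hk1)
      (by nlinarith : (0 : ℝ) ≤ 1 + k)) (sq_nonneg r)) (sq_nonneg b)]

lemma ineq_highA (hk0 : 0 < k) (hk1 : k ≤ 1) (hα : k * α = 2 - k) (hhigh : 1 ≤ r ^ 2 * k) :
    k ^ 2 * (α * (d * d) + (1 + α) * (b * b + th * th) + (r * b - d) * (r * b - d))
      ≤ 4 * ((k * r * b) ^ 2 + d ^ 2 + th ^ 2) := by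
  nlinarith [mul_nonneg (mul_nonneg hk0.le hk0.le) (sq_nonneg (r * b + d)),
    mul_nonneg (sub_nonneg.mpr hhigh) (mul_nonneg hk0.le (sq_nonneg b)),
    mul_nonneg (mul_nonneg hk0.le hk0.le) (sq_nonneg d),
    mul_nonneg (sub_nonneg.mpr hk1) (mul_nonneg hk0.le (sq_nonneg th)),
    mul_nonneg (sub_nonneg.mpr hk1) (mul_nonneg hk0.le (sq_nonneg d)),
    mul_nonneg (sub_nonneg.mpr hk1) (sq_nonneg th),
    mul_nonneg (sub_nonneg.mpr hk1) (sq_nonneg d),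
    sq_nonneg d, sq_nonneg th]

lemma ineq_highC (hk0 : 0 < k) (hk1 : k ≤ 1) (hα1 : 1 ≤ α) :
    (k * r * b) ^ 2 + d ^ 2 + th ^ 2
      ≤ 3 * (α * (d * d) + (1 + α) * (b * b + th * th) + (r * b - d) * (r * b - d)) := by
  nlinarith [sq_nonneg (2 * (r * b) - 3 * d),
    mul_nonneg (sub_nonneg.mpr hα1) (sq_nonneg d),
    mul_nonneg (sub_nonneg.mpr hα1) (sq_nonneg b),
    mul_nonneg (sub_nonneg.mpr hα1) (sq_nonneg th),
    mul_nonneg (mul_nonneg (sub_nonneg.mpr hk1) (by linarith : (0 : ℝ) ≤ 1 + k))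
      (mul_nonneg (sq_nonneg r) (sq_nonneg b)),
    sq_nonneg b, sq_nonneg th, sq_nonneg d]

end ptwise


lemma key_combine1 {P Fv S k r2 : ℝ} (h1 : P ≤ -r2 * S) (h2 : k * Fv ≤ 5 * S)
    (hS : 0 ≤ S) (hr2 : 0 ≤ r2) : P + k * r2 / 10 * Fv ≤ 0 := by
  nlinarith [mul_le_mul_of_nonneg_left h2 (by linarith : (0 : ℝ) ≤ r2 / 10),
    mul_nonneg hr2 hS]

lemma key_combine2 {P Fv g k : ℝ} (h1 : P ≤ -g) (h2 : k ^ 2 * Fv ≤ 4 * g) :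
    P + k ^ 2 / 4 * Fv ≤ 0 := by linarith

lemma sqrtM1 {k : ℝ} (hk0 : 0 < k) (hk1 : k ≤ 1) : Real.sqrt (5 / k) ≤ 4 / k := by
  have h1 : (5 : ℝ) / k ≤ (4 / k) ^ 2 := by
    rw [div_pow, div_le_div_iff₀ hk0 (by positivity)]
    nlinarith
  calc Real.sqrt (5 / k) ≤ Real.sqrt ((4 / k) ^ 2) := Real.sqrt_le_sqrt h1
  _ = 4 / k := Real.sqrt_sq (by positivity)

lemma sqrtM2 {k : ℝ} (hk0 : 0 < k) : Real.sqrt (12 / k ^ 2) ≤ 4 / k := by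
  have h1 : (12 : ℝ) / k ^ 2 ≤ (4 / k) ^ 2 := by
    rw [div_pow]
    gcongr
    norm_num
  calc Real.sqrt (12 / k ^ 2) ≤ Real.sqrt ((4 / k) ^ 2) := Real.sqrt_le_sqrt h1
  _ = 4 / k := Real.sqrt_sq (by positivity)

lemma expE1 {k r t : ℝ} (hk0 : 0 < k) (hk1 : k ≤ 1) (hr2 : 0 ≤ r ^ 2) (ht : 0 ≤ t) :
    Real.exp (-(k * r ^ 2 / 10 * t) / 2) ≤ Real.exp (-(k ^ 2 / 20) * k * r ^ 2 * t) := by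
  apply Real.exp_le_exp.mpr
  have hkk : k ^ 2 ≤ 1 := by nlinarith
  nlinarith [mul_nonneg (mul_nonneg (mul_nonneg hk0.le hr2) ht) (sub_nonneg.mpr hkk)]

lemma expE2 {k t : ℝ} (hk0 : 0 < k) (ht : 0 ≤ t) :
    Real.exp (-(k ^ 2 / 4 * t) / 2) ≤ Real.exp (-(k ^ 2 / 20) * t) := by
  apply Real.exp_le_exp.mpr
  nlinarith [mul_nonneg (mul_nonneg hk0.le hk0.le) ht]

/-- for `κ > 0`, every eigenvalue of `A` has nonpositive real part, and
there exist `c, C > 0` depending only on `min 1 κ` such that solutions of `x' = A x`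
decay like `C e^{−c·min(1,κ)·min(r²,1/min(1,κ)) t}`: in the low-frequency regime
`r² min(1,κ) ≤ 1` in the plain Euclidean norm with rate `e^{−c min(1,κ) r² t}`, and in
the high-frequency regime `r² min(1,κ) ≥ 1` in the weighted norm with rate `e^{−c t}`. -/
theorem acoustic_matrix_decay (κ : ℝ) (hκ : 0 < κ) :
    (∀ r : ℝ, 0 < r → ∀ μ : ℂ,
      ((acousticMatrix r κ).map (Complex.ofReal ·)).charpoly.IsRoot μ → μ.re ≤ 0) ∧
    ∃ c C : ℝ, 0 < c ∧ 0 < C ∧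
      ∀ r : ℝ, 0 < r → ∀ x : ℝ → Fin 3 → ℝ,
        (∀ t i, HasDerivAt (fun s => x s i) ((acousticMatrix r κ).mulVec (x t) i) t) →
        ((r ^ 2 * min 1 κ ≤ 1 →
            ∀ t : ℝ, 0 ≤ t →
              Real.sqrt (∑ i, x t i ^ 2)
                ≤ C * Real.exp (-c * min 1 κ * r ^ 2 * t) * Real.sqrt (∑ i, x 0 i ^ 2)) ∧
          (1 ≤ r ^ 2 * min 1 κ →
            ∀ t : ℝ, 0 ≤ t →
              wNorm (min 1 κ) r (x t) ≤ C * Real.exp (-c * t) * wNorm (min 1 κ) r (x 0))) := by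
  constructor
  · -- eigenvalue part
    intro r hr μ hroot
    obtain ⟨v, hv, hmv⟩ := charpoly_root_eigen hroot
    have e0 : μ * v 0 = -(r : ℂ) * v 1 := by
      have := congrFun hmv 0
      simp [acousticMatrix, Matrix.mulVec, dotProduct, Fin.sum_univ_three,
        Matrix.map_apply] at this
      rw [← this]; ring
    have e1 : μ * v 1 = (r : ℂ) * v 0 - (r : ℂ) ^ 2 * v 1 + (r : ℂ) * v 2 := by
      have := congrFun hmv 1
      simp [acousticMatrix, Matrix.mulVec, dotProduct, Fin.sum_univ_three,
        Matrix.map_apply] at this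
      rw [← this]; ring
    have e2 : μ * v 2 = -(r : ℂ) * v 1 - (κ : ℂ) * (r : ℂ) ^ 2 * v 2 := by
      have := congrFun hmv 2
      simp [acousticMatrix, Matrix.mulVec, dotProduct, Fin.sum_univ_three,
        Matrix.map_apply] at this
      rw [← this]; ring
    set a0 := (v 0).re; set b0 := (v 0).im
    set a1 := (v 1).re; set b1 := (v 1).im
    set a2 := (v 2).re; set b2 := (v 2).im
    have E0 := Complex.ext_iff.mp e0
    have E1 := Complex.ext_iff.mp e1
    have E2 := Complex.ext_iff.mp e2
    simp [Complex.mul_re, Complex.mul_im, Complex.add_re, Complex.add_im, Complex.sub_re,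
      Complex.sub_im, Complex.neg_re, Complex.neg_im, Complex.ofReal_re, Complex.ofReal_im,
      pow_two] at E0 E1 E2
    obtain ⟨E0r, E0i⟩ := E0
    obtain ⟨E1r, E1i⟩ := E1
    obtain ⟨E2r, E2i⟩ := E2
    have hcase : v 0 ≠ 0 ∨ v 1 ≠ 0 ∨ v 2 ≠ 0 := by
      by_contra h
      push_neg at h
      exact hv (funext fun i => by fin_cases i <;> simp [h.1, h.2.1, h.2.2])
    have hS : 0 < a0 ^ 2 + b0 ^ 2 + a1 ^ 2 + b1 ^ 2 + a2 ^ 2 + b2 ^ 2 := by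
      have h1 := sq_nonneg a0; have h2 := sq_nonneg b0; have h3 := sq_nonneg a1
      have h4 := sq_nonneg b1; have h5 := sq_nonneg a2; have h6 := sq_nonneg b2
      rcases hcase with h | h | h <;>
        [(have hp := Complex.normSq_pos.mpr h); (have hp := Complex.normSq_pos.mpr h);
         (have hp := Complex.normSq_pos.mpr h)] <;>
        rw [Complex.normSq_apply] at hp <;> nlinarith
    have key : μ.re * (a0 ^ 2 + b0 ^ 2 + a1 ^ 2 + b1 ^ 2 + a2 ^ 2 + b2 ^ 2)
        = -(r * r) * (a1 ^ 2 + b1 ^ 2) - κ * (r * r) * (a2 ^ 2 + b2 ^ 2) := by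
      linear_combination a0 * E0r + b0 * E0i + a1 * E1r + b1 * E1i + a2 * E2r + b2 * E2i
    nlinarith [sq_nonneg a1, sq_nonneg b1, sq_nonneg a2, sq_nonneg b2,
      mul_pos (mul_pos hr hr) hκ, mul_pos hr hr]
  · -- decay part
    set k : ℝ := min 1 κ with hkdef
    have hk0 : 0 < k := lt_min one_pos hκ
    have hk1 : k ≤ 1 := min_le_left _ _
    have hkκ : k ≤ κ := min_le_right _ _
    refine ⟨k ^ 2 / 20, 4 / k, by positivity, by positivity, ?_⟩
    intro r hr x hx
    have hr2 : (0 : ℝ) < r ^ 2 := by positivity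
    set α : ℝ := 2 / k - 1 with hαdef
    have hα : k * α = 2 - k := by rw [hαdef]; field_simp
    have hα1 : 1 ≤ α := by
      rw [hαdef, le_sub_iff_add_le, le_div_iff₀ hk0]; linarith
    have hκα : 2 ≤ κ * (1 + α) := by
      have h1 : k * (1 + α) = 2 := by linarith
      have h2 : (0 : ℝ) ≤ 1 + α := by linarith
      have h3 := mul_le_mul_of_nonneg_right hkκ h2
      linarith
    -- component derivatives
    have hb : ∀ t, HasDerivAt (fun s => x s 0) (-r * x t 1) t := by
      intro t
      have e : (acousticMatrix r κ).mulVec (x t) 0 = -r * x t 1 := by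
        simp [acousticMatrix, Matrix.mulVec, dotProduct, Fin.sum_univ_three]
      exact e ▸ hx t 0
    have hd : ∀ t, HasDerivAt (fun s => x s 1) (r * x t 0 - r ^ 2 * x t 1 + r * x t 2) t := by
      intro t
      have e : (acousticMatrix r κ).mulVec (x t) 1 = r * x t 0 - r ^ 2 * x t 1 + r * x t 2 := by
        simp [acousticMatrix, Matrix.mulVec, dotProduct, Fin.sum_univ_three]; ring
      exact e ▸ hx t 1
    have hθ : ∀ t, HasDerivAt (fun s => x s 2) (-r * x t 1 - κ * r ^ 2 * x t 2) t := by
      intro t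
      have e : (acousticMatrix r κ).mulVec (x t) 2 = -r * x t 1 - κ * r ^ 2 * x t 2 := by
        simp [acousticMatrix, Matrix.mulVec, dotProduct, Fin.sum_univ_three]; ring
      exact e ▸ hx t 2
    set F : ℝ → ℝ := fun t => α * (x t 1 * x t 1)
        + (1 + α) * (x t 0 * x t 0 + x t 2 * x t 2)
        + (r * x t 0 - x t 1) * (r * x t 0 - x t 1) with hFdef
    set Φ : ℝ → ℝ := fun t =>
        α * ((r * x t 0 - r ^ 2 * x t 1 + r * x t 2) * x t 1
              + x t 1 * (r * x t 0 - r ^ 2 * x t 1 + r * x t 2))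
        + (1 + α) * ((-r * x t 1 * x t 0 + x t 0 * (-r * x t 1))
              + ((-r * x t 1 - κ * r ^ 2 * x t 2) * x t 2
                  + x t 2 * (-r * x t 1 - κ * r ^ 2 * x t 2)))
        + ((r * (-r * x t 1) - (r * x t 0 - r ^ 2 * x t 1 + r * x t 2)) * (r * x t 0 - x t 1)
            + (r * x t 0 - x t 1) * (r * (-r * x t 1) - (r * x t 0 - r ^ 2 * x t 1 + r * x t 2)))
        with hΦdef
    have hF : ∀ t, HasDerivAt F (Φ t) t := by
      intro t
      exact ((((hd t).mul (hd t)).const_mul α).add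
          ((((hb t).mul (hb t)).add ((hθ t).mul (hθ t))).const_mul (1 + α))).add
        ((((hb t).const_mul r).sub (hd t)).mul (((hb t).const_mul r).sub (hd t)))
    have hlowF : ∀ t, (x t 0) ^ 2 + (x t 1) ^ 2 + (x t 2) ^ 2 ≤ F t := fun t =>
      ineq_lowF hα1
    constructor
    · -- low-frequency regime
      intro hlow t ht
      have claimB : ∀ s, Φ s ≤ -(r ^ 2) * ((x s 0) ^ 2 + (x s 1) ^ 2 + (x s 2) ^ 2) := by
        intro s
        exact ineq_lowB hα1 hκα
      have claimA : ∀ s, k * F s ≤ 5 * ((x s 0) ^ 2 + (x s 1) ^ 2 + (x s 2) ^ 2) := by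
        intro s
        exact ineq_lowA hk0 hk1 hα hlow
      have key1 : ∀ s, Φ s + (k * r ^ 2 / 10) * F s ≤ 0 := by
        intro s
        exact key_combine1 (claimB s) (claimA s) (by positivity) hr2.le
      have dec := decay_aux F Φ (k * r ^ 2 / 10) hF key1 t ht
      have hF0 : F 0 ≤ 5 / k * ((x 0 0) ^ 2 + (x 0 1) ^ 2 + (x 0 2) ^ 2) := by
        have := claimA 0
        rw [div_mul_eq_mul_div, le_div_iff₀ hk0]
        linarith
      have hchain : (x t 0) ^ 2 + (x t 1) ^ 2 + (x t 2) ^ 2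
          ≤ (5 / k) * Real.exp (-(k * r ^ 2 / 10 * t))
              * ((x 0 0) ^ 2 + (x 0 1) ^ 2 + (x 0 2) ^ 2) := by
        have e1 := hlowF t
        have e2 := mul_le_mul_of_nonneg_right hF0 (Real.exp_nonneg (-(k * r ^ 2 / 10 * t)))
        calc (x t 0) ^ 2 + (x t 1) ^ 2 + (x t 2) ^ 2 ≤ F t := e1
        _ ≤ F 0 * Real.exp (-(k * r ^ 2 / 10 * t)) := dec
        _ ≤ 5 / k * ((x 0 0) ^ 2 + (x 0 1) ^ 2 + (x 0 2) ^ 2)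
              * Real.exp (-(k * r ^ 2 / 10 * t)) := e2
        _ = _ := by ring
      have hsq := sqrt_le_of_le_mul (by positivity : (0 : ℝ) ≤ 5 / k)
        (Real.exp_nonneg _) (by positivity) hchain
      rw [sqrt_exp'] at hsq
      simp only [Fin.sum_univ_three]
      refine hsq.trans ?_
      have hM : Real.sqrt (5 / k) ≤ 4 / k := sqrtM1 hk0 hk1
      have hE : Real.exp (-(k * r ^ 2 / 10 * t) / 2)
          ≤ Real.exp (-(k ^ 2 / 20) * k * r ^ 2 * t) := expE1 hk0 hk1 hr2.le ht
      exact mul_le_mul (mul_le_mul hM hE (Real.exp_nonneg _) (by positivity)) le_rfl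
        (Real.sqrt_nonneg _) (by positivity)
    · -- high-frequency regime
      intro hhigh t ht
      have hr1 : (1 : ℝ) ≤ r ^ 2 := by
        have h := mul_le_mul_of_nonneg_left hk1 hr2.le
        rw [mul_one] at h
        linarith
      have claimB2 : ∀ s, Φ s ≤ -((k * r * x s 0) ^ 2 + (x s 1) ^ 2 + (x s 2) ^ 2) := by
        intro s
        exact ineq_highB hk1 hα1 hκα hk0 hr1
      have claimA2 : ∀ s, k ^ 2 * F s
          ≤ 4 * ((k * r * x s 0) ^ 2 + (x s 1) ^ 2 + (x s 2) ^ 2) := by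
        intro s
        exact ineq_highA hk0 hk1 hα hhigh
      have claimC2 : ∀ s, (k * r * x s 0) ^ 2 + (x s 1) ^ 2 + (x s 2) ^ 2 ≤ 3 * F s := by
        intro s
        exact ineq_highC hk0 hk1 hα1
      have key2 : ∀ s, Φ s + (k ^ 2 / 4) * F s ≤ 0 := by
        intro s
        exact key_combine2 (claimB2 s) (claimA2 s)
      have dec := decay_aux F Φ (k ^ 2 / 4) hF key2 t ht
      have hF0 : F 0 ≤ 4 / k ^ 2 * ((k * r * x 0 0) ^ 2 + (x 0 1) ^ 2 + (x 0 2) ^ 2) := by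
        have := claimA2 0
        rw [div_mul_eq_mul_div, le_div_iff₀ (by positivity : (0 : ℝ) < k ^ 2)]
        linarith
      have hchain : (k * r * x t 0) ^ 2 + (x t 1) ^ 2 + (x t 2) ^ 2
          ≤ (12 / k ^ 2) * Real.exp (-(k ^ 2 / 4 * t))
              * ((k * r * x 0 0) ^ 2 + (x 0 1) ^ 2 + (x 0 2) ^ 2) := by
        have e1 := claimC2 t
        have e2 := mul_le_mul_of_nonneg_right hF0 (Real.exp_nonneg (-(k ^ 2 / 4 * t)))
        calc (k * r * x t 0) ^ 2 + (x t 1) ^ 2 + (x t 2) ^ 2 ≤ 3 * F t := e1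
        _ ≤ 3 * (F 0 * Real.exp (-(k ^ 2 / 4 * t))) := by linarith
        _ ≤ 3 * (4 / k ^ 2 * ((k * r * x 0 0) ^ 2 + (x 0 1) ^ 2 + (x 0 2) ^ 2)
              * Real.exp (-(k ^ 2 / 4 * t))) := by linarith
        _ = _ := by ring
      have hsq := sqrt_le_of_le_mul (by positivity : (0 : ℝ) ≤ 12 / k ^ 2)
        (Real.exp_nonneg _) (by positivity) hchain
      rw [sqrt_exp'] at hsq
      unfold wNorm
      refine hsq.trans ?_
      have hM : Real.sqrt (12 / k ^ 2) ≤ 4 / k := sqrtM2 hk0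
      have hE : Real.exp (-(k ^ 2 / 4 * t) / 2) ≤ Real.exp (-(k ^ 2 / 20) * t) :=
        expE2 hk0 ht
      exact mul_le_mul (mul_le_mul hM hE (Real.exp_nonneg _) (by positivity)) le_rfl
        (Real.sqrt_nonneg _) (by positivity)
end
end
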